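/- For a product state ρ = ρ_m ⊗ ρ_n and the Lie algebra component g = span_ℝ{iP_q ⊗ Π/√χ} with Π a rank-χ projection, the Frobenius norm of the projection of iρ onto g equals χ^{−1/2} tr(Π ρ_n) ‖(ρ_m)₀‖_F, where (ρ_m)₀ = ρ_m − 2^{−m} tr(ρ_m) I is the traceless part of ρ_m. -/

import Mathlib

/-!
The family `v q = i (P q ⊗ Π)` is Hilbert–Schmidt orthogonal with `⟨v q, v q'⟩ = χ δ_{qq'}`,
so the projection of `X = i ρ_m ⊗ ρ_n` onto its real span has squared norm
`∑_q (Re ⟨v q, X⟩)² / χ`. The trace factorises over the Kronecker product: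
`⟨v q, X⟩ = tr(P_q ρ_m) tr(Π ρ_n)`, and `tr(P_q ρ_m) = tr(P_q (ρ_m)₀)` because `P_q` is
traceless. Since `tr(Π ρ_n) = tr(Π ρ_n Π) ≥ 0` is real, the sum becomes
`tr(Π ρ_n)² ∑_q (Re tr(P_q (ρ_m)₀))² / χ`, and the last sum is `‖(ρ_m)₀‖²` because
`(ρ_m)₀` lies in the span of the orthonormal family `P`.
-/

open Matrix Kronecker
open scoped ComplexOrder

section OrthogonalFamily

variable {ι k : Type*} [Fintype ι] [Fintype k] {w : ι → Matrix k k ℂ} {d : ℝ}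

lemma trace_conjTranspose_sum_smul_mul (c : ι → ℝ) (X : Matrix k k ℂ) :
    trace ((∑ q, c q • w q)ᴴ * X) = ∑ q, (c q : ℂ) * trace ((w q)ᴴ * X) := by
  simp [conjTranspose_sum, Finset.sum_mul, trace_sum, Complex.real_smul]

variable [DecidableEq ι]

lemma trace_conjTranspose_mul_sum_smul
    (hw : ∀ q q', trace ((w q)ᴴ * w q') = if q = q' then (d : ℂ) else 0) (c : ι → ℝ) (q : ι) :
    trace ((w q)ᴴ * ∑ q', c q' • w q') = ((c q * d : ℝ) : ℂ) := by
  simp [Matrix.mul_sum, trace_sum, hw, Complex.real_smul]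

lemma re_trace_conjTranspose_mul_self_eq_sum_sq_div
    (hw : ∀ q q', trace ((w q)ᴴ * w q') = if q = q' then (d : ℂ) else 0) (hd : d ≠ 0)
    {X p : Matrix k k ℂ} (hp : p ∈ Submodule.span ℝ (Set.range w))
    (horth : ∀ q, (trace ((w q)ᴴ * (X - p))).re = 0) :
    (trace (pᴴ * p)).re = (∑ q, (trace ((w q)ᴴ * X)).re ^ 2) / d := by
  obtain ⟨c, rfl⟩ := (Submodule.mem_span_range_iff_exists_fun ℝ).mp hp
  have hcoeff : ∀ q, (trace ((w q)ᴴ * X)).re = c q * d := fun q => by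
    have h := horth q
    rwa [Matrix.mul_sub, trace_sub, Complex.sub_re, trace_conjTranspose_mul_sum_smul hw,
      Complex.ofReal_re, sub_eq_zero] at h
  simp only [trace_conjTranspose_sum_smul_mul, trace_conjTranspose_mul_sum_smul hw,
    Complex.re_sum, Complex.re_ofReal_mul, Complex.ofReal_re, hcoeff, Finset.sum_div]
  refine Finset.sum_congr rfl fun q _ => ?_
  field_simp

end OrthogonalFamily

lemma conjTranspose_I_smul_mul_I_smul {k : Type*} [Fintype k] (X Y : Matrix k k ℂ) :
    (Complex.I • X)ᴴ * (Complex.I • Y) = Xᴴ * Y := by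
  rw [conjTranspose_smul, Matrix.smul_mul, Matrix.mul_smul, smul_smul, Complex.star_def,
    Complex.conj_I, neg_mul, Complex.I_mul_I, neg_neg, one_smul]

lemma trace_conjTranspose_kronecker_mul_kronecker {α β : Type*} [Fintype α] [Fintype β]
    (A C : Matrix α α ℂ) (B D : Matrix β β ℂ) :
    trace ((A ⊗ₖ B)ᴴ * (C ⊗ₖ D)) = trace (Aᴴ * C) * trace (Bᴴ * D) := by
  rw [conjTranspose_kronecker, ← mul_kronecker_mul, trace_kronecker]

lemma trace_conjTranspose_mul_sub_smul_one {k : Type*} [Fintype k] [DecidableEq k]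
    {B : Matrix k k ℂ} (hB : B.trace = 0) (A : Matrix k k ℂ) (c : ℂ) :
    trace (Bᴴ * (A - c • 1)) = trace (Bᴴ * A) := by
  simp [Matrix.mul_sub, trace_conjTranspose, hB]

lemma Matrix.PosSemidef.trace_mul_nonneg_of_isHermitian_of_idempotent
    {k R : Type*} [Fintype k] [CommRing R] [PartialOrder R] [StarRing R] [StarOrderedRing R]
    {A B : Matrix k k R} (hA : A.IsHermitian) (hAA : A * A = A) (hB : B.PosSemidef) :
    0 ≤ trace (A * B) := by
  have h := (hB.conjTranspose_mul_mul_same A).trace_nonneg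
  rwa [hA.eq, trace_mul_comm, ← Matrix.mul_assoc, hAA] at h

theorem frobenius_norm_hs_projection_product_state_general
    {m n : ℕ} {ι : Type*} [Fintype ι] [DecidableEq ι]
    (P : ι → Matrix (Fin m → Fin 2) (Fin m → Fin 2) ℂ)
    (hPtr : ∀ q, (P q).trace = 0)
    (hPon : ∀ q q', Matrix.trace ((P q)ᴴ * P q') = if q = q' then 1 else 0)
    (hPspan : ∀ A : Matrix (Fin m → Fin 2) (Fin m → Fin 2) ℂ,
      A.IsHermitian → A.trace = 0 → A ∈ Submodule.span ℝ (Set.range P))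
    (Pi : Matrix (Fin n → Fin 2) (Fin n → Fin 2) ℂ)
    (hPiherm : Pi.IsHermitian) (hPiproj : Pi * Pi = Pi)
    (χ : ℕ) (hχ : 0 < χ) (hPirank : Pi.trace = (χ : ℂ))
    (ρm : Matrix (Fin m → Fin 2) (Fin m → Fin 2) ℂ)
    (hρm : ρm.PosSemidef) (hρmtr : ρm.trace = 1)
    (ρn : Matrix (Fin n → Fin 2) (Fin n → Fin 2) ℂ)
    (hρn : ρn.PosSemidef)
    (p : Matrix ((Fin m → Fin 2) × (Fin n → Fin 2)) ((Fin m → Fin 2) × (Fin n → Fin 2)) ℂ)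
    (hmem : p ∈ Submodule.span ℝ (Set.range fun q => Complex.I • (P q ⊗ₖ Pi)))
    (horth : ∀ x ∈ Submodule.span ℝ (Set.range fun q => Complex.I • (P q ⊗ₖ Pi)),
      (Matrix.trace (xᴴ * (Complex.I • (ρm ⊗ₖ ρn) - p))).re = 0) :
    Real.sqrt ((Matrix.trace (pᴴ * p)).re)
      = (Real.sqrt χ)⁻¹ * (Matrix.trace (Pi * ρn)).re
          * Real.sqrt ((Matrix.trace
              ((ρm - ((2 : ℂ) ^ m)⁻¹ • 1)ᴴ * (ρm - ((2 : ℂ) ^ m)⁻¹ • 1))).re) := by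
  set ρm₀ := ρm - ((2 : ℂ) ^ m)⁻¹ • 1
  set t := (trace (Pi * ρn)).re
  have hPon' : ∀ q q', trace ((P q)ᴴ * P q') = if q = q' then ((1 : ℝ) : ℂ) else 0 := by
    simpa using hPon
  have hv : ∀ q q', trace ((Complex.I • (P q ⊗ₖ Pi))ᴴ * (Complex.I • (P q' ⊗ₖ Pi))) =
      if q = q' then ((χ : ℝ) : ℂ) else 0 := fun q q' => by
    rw [conjTranspose_I_smul_mul_I_smul, trace_conjTranspose_kronecker_mul_kronecker, hPon,
      hPiherm.eq, hPiproj, hPirank]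
    split_ifs <;> simp
  have hρm₀_mem : ρm₀ ∈ Submodule.span ℝ (Set.range P) := by
    refine hPspan ρm₀ (hρm.1.sub (isHermitian_one.smul ?_)) ?_
    · simp [IsSelfAdjoint]
    · simp [ρm₀, hρmtr]
  obtain ⟨ht_nonneg, ht_im⟩ := Complex.nonneg_iff.mp
    (hρn.trace_mul_nonneg_of_isHermitian_of_idempotent hPiherm hPiproj)
  have ht : trace (Pi * ρn) = t := Complex.ext rfl ht_im.symm
  have hcoeff : ∀ q, (trace ((Complex.I • (P q ⊗ₖ Pi))ᴴ * (Complex.I • (ρm ⊗ₖ ρn)))).re =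
      (trace ((P q)ᴴ * ρm₀)).re * t := fun q => by
    rw [conjTranspose_I_smul_mul_I_smul, trace_conjTranspose_kronecker_mul_kronecker,
      hPiherm.eq, ht, trace_conjTranspose_mul_sub_smul_one (hPtr q), Complex.re_mul_ofReal]
  have hp_norm := re_trace_conjTranspose_mul_self_eq_sum_sq_div hv (by positivity) hmem
    fun q => horth _ (Submodule.subset_span ⟨q, rfl⟩)
  have hρm₀_norm := re_trace_conjTranspose_mul_self_eq_sum_sq_div hPon' one_ne_zero hρm₀_mem
    (X := ρm₀) fun q => by simp
  simp only [hp_norm, hρm₀_norm, hcoeff, mul_pow, ← Finset.sum_mul, div_one]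
  rw [Real.sqrt_div' _ (Nat.cast_nonneg χ), Real.sqrt_mul' _ (sq_nonneg t),
    Real.sqrt_sq ht_nonneg]
  ring

/-- **Frobenius norm of the Hilbert–Schmidt projection of a product state onto
`g = span_ℝ{iP_q ⊗ Π/√χ}`.** Here `{P_q}` is an orthonormal basis (Hilbert–Schmidt) of
traceless Hermitian `2^m × 2^m` matrices and `Π` an orthogonal projection of rank `χ`.
If `p` is the orthogonal projection of `i(ρ_m ⊗ ρ_n)` onto `g` (characterized by `p ∈ g`
and the residual being Hilbert–Schmidt orthogonal to `g`), then
`‖p‖_F = χ^{−1/2} tr(Π ρ_n) ‖ρ_m − 2^{−m} I‖_F`, where `ρ_m − 2^{−m} tr(ρ_m) I` is the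
traceless part of `ρ_m`. -/
theorem frobenius_norm_hs_projection_product_state
    {m n : ℕ} {ι : Type*} [Fintype ι] [DecidableEq ι]
    (P : ι → Matrix (Fin m → Fin 2) (Fin m → Fin 2) ℂ)
    (hPherm : ∀ q, (P q).IsHermitian) (hPtr : ∀ q, (P q).trace = 0)
    (hPon : ∀ q q', Matrix.trace ((P q)ᴴ * P q') = if q = q' then 1 else 0)
    (hPspan : ∀ A : Matrix (Fin m → Fin 2) (Fin m → Fin 2) ℂ,
      A.IsHermitian → A.trace = 0 → A ∈ Submodule.span ℝ (Set.range P))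
    (Pi : Matrix (Fin n → Fin 2) (Fin n → Fin 2) ℂ)
    (hPiherm : Pi.IsHermitian) (hPiproj : Pi * Pi = Pi)
    (χ : ℕ) (hχ : 0 < χ) (hPirank : Pi.trace = (χ : ℂ))
    (ρm : Matrix (Fin m → Fin 2) (Fin m → Fin 2) ℂ)
    (hρm : ρm.PosSemidef) (hρmtr : ρm.trace = 1)
    (ρn : Matrix (Fin n → Fin 2) (Fin n → Fin 2) ℂ)
    (hρn : ρn.PosSemidef) (hρntr : ρn.trace = 1)
    (p : Matrix ((Fin m → Fin 2) × (Fin n → Fin 2)) ((Fin m → Fin 2) × (Fin n → Fin 2)) ℂ)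
    (hmem : p ∈ Submodule.span ℝ (Set.range fun q => Complex.I • (P q ⊗ₖ Pi)))
    (horth : ∀ x ∈ Submodule.span ℝ (Set.range fun q => Complex.I • (P q ⊗ₖ Pi)),
      (Matrix.trace (xᴴ * (Complex.I • (ρm ⊗ₖ ρn) - p))).re = 0) :
    Real.sqrt ((Matrix.trace (pᴴ * p)).re)
      = (Real.sqrt χ)⁻¹ * (Matrix.trace (Pi * ρn)).re
          * Real.sqrt ((Matrix.trace
              ((ρm - ((2 : ℂ) ^ m)⁻¹ • 1)ᴴ * (ρm - ((2 : ℂ) ^ m)⁻¹ • 1))).re) :=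
  frobenius_norm_hs_projection_product_state_general P hPtr hPon hPspan Pi hPiherm hPiproj χ hχ
    hPirank ρm hρm hρmtr ρn hρn p hmem horth
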